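/- Let F be a field, k ≥ 1, and n_1, ..., n_k positive integers each coprime to char F (or char F = 0). Let g_i ∈ F[X] with deg g_i < n_i, and let M(g_1,...,g_k)_{m×(n_1+...+n_k)} be the side-by-side concatenation of the generalized circulant matrices M(g_i)_{m×n_i}. Let s = deg lcm( (X^{n_1} − 1)/gcd(g_1, X^{n_1} − 1), ..., (X^{n_k} − 1)/gcd(g_k, X^{n_k} − 1) ) and r = min{m, s}. Then the rank of M(g_1,...,g_k)_{m×(n_1+...+n_k)} equals r, and its first r rows are linearly independent. -/

import Mathlib

open Polynomial Matrix

/-- The monic polynomial associated to `p` (and `0` for `p = 0`). -/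
noncomputable def monicize {F : Type*} [Field F] (p : Polynomial F) : Polynomial F :=
  Polynomial.C p.leadingCoeff⁻¹ * p

/-- The monic greatest common divisor of two polynomials over a field. -/
noncomputable def pgcd {F : Type*} [Field F] (p q : Polynomial F) : Polynomial F :=
  letI := Classical.decEq F
  monicize (EuclideanDomain.gcd p q)

/-- The monic least common multiple of two polynomials over a field. -/
noncomputable def plcm {F : Type*} [Field F] (p q : Polynomial F) : Polynomial F :=
  letI := Classical.decEq F
  monicize (EuclideanDomain.lcm p q)

/-- Generalized circulant matrix: `(i,k)`-entry is `g_{(k-i) mod n}`. -/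
def circMat (F : Type*) [Field F] (m n : ℕ) (g : Polynomial F) :
    Matrix (Fin m) (Fin n) F :=
  Matrix.of fun i k => g.coeff ((k.1 + (n - 1) * i.1) % n)

section Aux

variable {F : Type*} [Field F]

private lemma monicize_assoc (p : Polynomial F) : Associated (monicize p) p := by
  by_cases hp : p = 0
  · simp [monicize, hp]
  · have hc : p.leadingCoeff⁻¹ ≠ 0 := inv_ne_zero (leadingCoeff_ne_zero.mpr hp)
    exact (Associated.symm ⟨(isUnit_C.mpr (isUnit_iff_ne_zero.mpr hc)).unit, by
      rw [IsUnit.unit_spec, monicize, mul_comm]⟩)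

private lemma monic_monicize {p : Polynomial F} (hp : p ≠ 0) : (monicize p).Monic := by
  have := leadingCoeff_ne_zero.mpr hp
  unfold Monic monicize
  rw [leadingCoeff_mul, leadingCoeff_C, inv_mul_cancel₀ this]

private lemma pgcd_dvd_left (p q : Polynomial F) : pgcd p q ∣ p := by
  classical
  exact (monicize_assoc _).dvd.trans (EuclideanDomain.gcd_dvd_left p q)

private lemma pgcd_dvd_right (p q : Polynomial F) : pgcd p q ∣ q := by
  classical
  exact (monicize_assoc _).dvd.trans (EuclideanDomain.gcd_dvd_right p q)

private lemma dvd_pgcd {p q d : Polynomial F} (hp : d ∣ p) (hq : d ∣ q) : d ∣ pgcd p q := by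
  classical
  exact (EuclideanDomain.dvd_gcd hp hq).trans (monicize_assoc _).symm.dvd

private lemma pgcd_ne_zero {p q : Polynomial F} (hq : q ≠ 0) : pgcd p q ≠ 0 := by
  classical
  intro h
  have := (monicize_assoc (EuclideanDomain.gcd p q)).symm
  rw [show pgcd p q = monicize (EuclideanDomain.gcd p q) from rfl] at h
  rw [h] at this
  exact hq ((EuclideanDomain.gcd_eq_zero_iff.mp (associated_zero_iff_eq_zero _ |>.mp this)).2)

private lemma plcm_dvd_iff {a b p : Polynomial F} : plcm a b ∣ p ↔ a ∣ p ∧ b ∣ p := by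
  classical
  rw [show plcm a b = monicize (EuclideanDomain.lcm a b) from rfl]
  constructor
  · intro h
    exact EuclideanDomain.lcm_dvd_iff.mp ((monicize_assoc _).symm.dvd.trans h)
  · intro h
    exact (monicize_assoc _).dvd.trans (EuclideanDomain.lcm_dvd_iff.mpr h)

private lemma plcm_monic {a b : Polynomial F} (ha : a ≠ 0) (hb : b ≠ 0) : (plcm a b).Monic := by
  classical
  exact monic_monicize (by
    intro h
    rcases EuclideanDomain.lcm_eq_zero_iff.mp h with h' | h' <;> [exact ha h'; exact hb h'])

private lemma foldr_plcm_dvd_iff (l : List (Polynomial F)) (p : Polynomial F) :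
    l.foldr plcm 1 ∣ p ↔ ∀ a ∈ l, a ∣ p := by
  induction l with
  | nil => simp
  | cons a t ih => simp [plcm_dvd_iff, ih]

private lemma foldr_plcm_monic (l : List (Polynomial F)) (hl : ∀ a ∈ l, a ≠ 0) :
    (l.foldr plcm 1).Monic := by
  induction l with
  | nil => exact monic_one
  | cons a t ih =>
      exact plcm_monic (hl a (by simp)) (ih (fun b hb => hl b (by simp [hb]))).ne_zero

private lemma dvd_mul_iff_div_pgcd_dvd (g N p : Polynomial F) (hN : N ≠ 0) :
    N ∣ p * g ↔ N / pgcd g N ∣ p := by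
  set D := pgcd g N with hD
  have hD0 : D ≠ 0 := pgcd_ne_zero hN
  have hq : D * (N / D) = N := EuclideanDomain.mul_div_cancel' hD0 (pgcd_dvd_right g N)
  have hg1 : D * (g / D) = g := EuclideanDomain.mul_div_cancel' hD0 (pgcd_dvd_left g N)
  set q := N / D
  set g₁ := g / D
  have cop : IsCoprime q g₁ := by
    classical
    rw [← EuclideanDomain.gcd_isUnit_iff]
    set c := EuclideanDomain.gcd q g₁ with hc
    have h1 : D * c ∣ N := by
      rw [← hq]; exact mul_dvd_mul_left D (EuclideanDomain.gcd_dvd_left q g₁)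
    have h2 : D * c ∣ g := by
      rw [← hg1]; exact mul_dvd_mul_left D (EuclideanDomain.gcd_dvd_right q g₁)
    have h3 : D * c ∣ D := dvd_pgcd h2 h1
    have h4 : c ∣ 1 := (mul_dvd_mul_iff_left hD0).mp (by simpa using h3)
    exact isUnit_of_dvd_one h4
  constructor
  · intro h
    have h' : D * q ∣ D * (p * g₁) := by
      rw [hq]
      calc N ∣ p * g := h
        _ = D * (p * g₁) := by rw [← hg1]; ring
    exact cop.dvd_of_dvd_mul_right ((mul_dvd_mul_iff_left hD0).mp h')
  · rintro ⟨t, ht⟩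
    exact ⟨t * g₁, by rw [← hq, ← hg1, ht]; ring⟩

private lemma coeff_sum_C_mul_X_pow (nn : ℕ) (f : ℕ → F) (t : ℕ) :
    (∑ j ∈ Finset.range nn, C (f j) * X ^ j).coeff t = if t < nn then f t else 0 := by
  rw [finset_sum_coeff]
  simp only [coeff_C_mul, coeff_X_pow, mul_ite, mul_one, mul_zero]
  rw [Finset.sum_ite_eq (Finset.range nn) t f]
  simp [Finset.mem_range]

private lemma degree_sum_C_mul_X_pow_lt (nn : ℕ) (f : ℕ → F) :
    (∑ j ∈ Finset.range nn, C (f j) * X ^ j).degree < (nn : WithBot ℕ) := by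
  have := degree_sum_fin_lt (fun i : Fin nn => f i.1)
  rwa [Fin.sum_univ_eq_sum_range (fun j => C (f j) * X ^ j) nn] at this

private lemma modByMonic_eq_of_dvd {N P R : Polynomial F} (hN : N.Monic) (hR : R.degree < N.degree)
    (h : N ∣ P - R) : P %ₘ N = R := by
  have h1 : (P - R) %ₘ N = 0 := (modByMonic_eq_zero_iff_dvd hN).mpr h
  rw [sub_modByMonic] at h1
  have h2 : R %ₘ N = R := (modByMonic_eq_self_iff hN).mpr hR
  rw [h2] at h1
  exact sub_eq_zero.mp h1

private lemma xpow_mul_modByMonic (nn : ℕ) (hnn : 0 < nn) (g : Polynomial F)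
    (hg : g.degree < (nn : WithBot ℕ)) (r : ℕ) :
    (X ^ r * g) %ₘ (X ^ nn - 1) =
      ∑ j ∈ Finset.range nn, C (g.coeff ((j + (nn - 1) * r) % nn)) * X ^ j := by
  have hN : (X ^ nn - 1 : Polynomial F).Monic := by
    have := monic_X_pow_sub_C (1 : F) hnn.ne'
    simpa using this
  have hNdeg : (X ^ nn - 1 : Polynomial F).degree = nn := by
    have := degree_X_pow_sub_C hnn (1 : F)
    simpa using this
  induction r with
  | zero =>
      rw [pow_zero, one_mul]
      have hself : g %ₘ (X ^ nn - 1) = g :=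
        (modByMonic_eq_self_iff hN).mpr (by rw [hNdeg]; exact hg)
      rw [hself]
      apply Polynomial.ext
      intro t
      rw [coeff_sum_C_mul_X_pow]
      split
      · next h => rw [Nat.mul_zero, Nat.add_zero, Nat.mod_eq_of_lt h]
      · next h =>
          exact coeff_eq_zero_of_degree_lt (lt_of_lt_of_le hg (by
            exact_mod_cast Nat.cast_le.mpr (Nat.le_of_not_lt h)))
  | succ r ih =>
      set a : ℕ → F := fun j => g.coeff ((j + (nn - 1) * r) % nn) with ha
      set b : ℕ → F := fun j => g.coeff ((j + (nn - 1) * (r + 1)) % nn) with hb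
      set Rr : Polynomial F := ∑ j ∈ Finset.range nn, C (a j) * X ^ j with hRr
      apply modByMonic_eq_of_dvd hN
      · rw [hNdeg]; exact degree_sum_C_mul_X_pow_lt nn b
      · have key : ∀ u : ℕ, u + 1 < nn → b (u + 1) = a u := by
          intro u hu
          show g.coeff _ = g.coeff _
          congr 1
          rw [Nat.mul_succ]
          have : u + 1 + ((nn - 1) * r + (nn - 1)) = u + (nn - 1) * r + nn := by omega
          rw [this, Nat.add_mod_right]
        have keyb0 : b 0 = a (nn - 1) := by
          show g.coeff _ = g.coeff _
          congr 1
          rw [Nat.mul_succ]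
          congr 1
          omega
        have hdecomp : X ^ (r + 1) * g - (∑ j ∈ Finset.range nn, C (b j) * X ^ j) =
            X * (X ^ r * g - Rr) + C (a (nn - 1)) * (X ^ nn - 1) := by
          have hXR : X * Rr - (∑ j ∈ Finset.range nn, C (b j) * X ^ j) =
              C (a (nn - 1)) * (X ^ nn - 1) := by
            apply Polynomial.ext
            intro t
            rcases t with _ | u
            · simp only [coeff_sub, coeff_sum_C_mul_X_pow, mul_coeff_zero, coeff_X_zero,
                zero_mul, coeff_C_mul, coeff_one, coeff_X_pow]
              rw [if_pos hnn, keyb0, if_neg (by omega : ¬ (0:ℕ) = nn)]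
              simp [coeff_C]
            · rw [coeff_sub, coeff_X_mul, coeff_sum_C_mul_X_pow, coeff_sum_C_mul_X_pow,
                coeff_C_mul, coeff_sub, coeff_X_pow, coeff_one]
              rcases lt_trichotomy (u + 1) nn with h | h | h
              · rw [if_pos (by omega : u < nn), if_pos h, key u h,
                  if_neg (by omega : ¬ u + 1 = nn), if_neg (by omega : ¬ u + 1 = 0)]
                ring
              · rw [if_pos (by omega : u < nn), if_neg (by omega : ¬ u + 1 < nn),
                  if_pos h, if_neg (by omega : ¬ u + 1 = 0)]
                have : u = nn - 1 := by omega
                rw [this]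
                ring
              · rw [if_neg (by omega : ¬ u < nn), if_neg (by omega : ¬ u + 1 < nn),
                  if_neg (by omega : ¬ u + 1 = nn), if_neg (by omega : ¬ u + 1 = 0)]
                ring
          calc X ^ (r + 1) * g - (∑ j ∈ Finset.range nn, C (b j) * X ^ j)
              = X * (X ^ r * g - Rr) + (X * Rr - (∑ j ∈ Finset.range nn, C (b j) * X ^ j)) := by
                ring
            _ = X * (X ^ r * g - Rr) + C (a (nn - 1)) * (X ^ nn - 1) := by rw [hXR]
        rw [hdecomp]
        apply dvd_add
        · apply Dvd.dvd.mul_left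
          have hmd := modByMonic_add_div (X ^ r * g) (X ^ nn - 1)
          exact ⟨(X ^ r * g) /ₘ (X ^ nn - 1), by
            rw [← ih]; linear_combination -hmd⟩
        · exact Dvd.intro_left _ rfl

end Aux

theorem stmt_19 (F : Type*) [Field F]
    (m k : ℕ) (hm : 0 < m) (hk : 0 < k)
    (n : Fin k → ℕ) (hn : ∀ i, 0 < n i)
    (hchar : ∀ i, ringChar F = 0 ∨ Nat.Coprime (ringChar F) (n i))
    (g : Fin k → Polynomial F) (hg : ∀ i, (g i).degree < n i)
    (M : Matrix (Fin m) ((i : Fin k) × Fin (n i)) F)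
    (hM : ∀ (r : Fin m) (c : (i : Fin k) × Fin (n i)),
      M r c = circMat F m (n c.1) (g c.1) r c.2)
    (s : ℕ)
    (hs : s = ((List.ofFn fun i : Fin k =>
        (X ^ (n i) - 1) / pgcd (g i) (X ^ (n i) - 1)).foldr plcm 1).natDegree)
    (r : ℕ) (hr : r = min m s) :
    M.rank = r ∧
    LinearIndependent F (fun t : Fin r => M ⟨t.1, by omega⟩) := by
  classical
  set NN : Fin k → Polynomial F := fun t => X ^ (n t) - 1 with hNN
  have hNNmonic : ∀ t, (NN t).Monic := fun t => by
    simpa using monic_X_pow_sub_C (1 : F) (hn t).ne'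
  have hNNdeg : ∀ t, (NN t).degree = ((n t : ℕ) : WithBot ℕ) := fun t => by
    simpa using degree_X_pow_sub_C (hn t) (1 : F)
  set q : Fin k → Polynomial F := fun t => NN t / pgcd (g t) (NN t) with hq
  set L : Polynomial F := (List.ofFn fun i => q i).foldr plcm 1 with hL
  have hq0 : ∀ t, q t ≠ 0 := by
    intro t h
    have hcancel : pgcd (g t) (NN t) * (NN t / pgcd (g t) (NN t)) = NN t :=
      EuclideanDomain.mul_div_cancel' (pgcd_ne_zero (hNNmonic t).ne_zero) (pgcd_dvd_right _ _)
    rw [show NN t / pgcd (g t) (NN t) = q t from rfl, h, mul_zero] at hcancel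
    exact (hNNmonic t).ne_zero hcancel.symm
  have hLmonic : L.Monic := by
    apply foldr_plcm_monic
    intro a ha
    rw [List.mem_ofFn] at ha
    obtain ⟨i, rfl⟩ := ha
    exact hq0 i
  have hLdeg : L.natDegree = s := hs.symm
  -- the linear map sending `p` to the concatenated coefficient vectors of `p * gᵢ mod Xⁿⁱ - 1`
  set ψ : Polynomial F →ₗ[F] ((i : Fin k) × Fin (n i)) → F :=
    { toFun := fun p c => ((p * g c.1) %ₘ NN c.1).coeff c.2.1
      map_add' := fun p p' => by
        funext c
        simp [add_mul, add_modByMonic]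
      map_smul' := fun a p => by
        funext c
        simp [smul_mul_assoc, smul_modByMonic] } with hψ
  have hrow : ∀ i : Fin m, M i = ψ (X ^ (i : ℕ)) := by
    intro i
    funext c
    rw [hM]
    show (g c.1).coeff ((c.2.1 + (n c.1 - 1) * i.1) % n c.1)
      = ((X ^ (i : ℕ) * g c.1) %ₘ NN c.1).coeff c.2.1
    rw [show NN c.1 = X ^ (n c.1) - 1 from rfl,
      xpow_mul_modByMonic (n c.1) (hn c.1) (g c.1) (hg c.1) i.1,
      coeff_sum_C_mul_X_pow, if_pos c.2.isLt]
  have hker : ∀ p : Polynomial F, ψ p = 0 ↔ L ∣ p := by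
    intro p
    constructor
    · intro h
      have hdvd : ∀ t : Fin k, NN t ∣ p * g t := by
        intro t
        rw [← modByMonic_eq_zero_iff_dvd (hNNmonic t)]
        apply Polynomial.ext
        intro j
        rw [coeff_zero]
        by_cases hj : j < n t
        · have := congrFun h ⟨t, ⟨j, hj⟩⟩
          exact this
        · refine coeff_eq_zero_of_degree_lt (lt_of_lt_of_le
            (lt_of_lt_of_le (degree_modByMonic_lt _ (hNNmonic t)) (le_of_eq (hNNdeg t))) ?_)
          exact_mod_cast Nat.cast_le.mpr (Nat.le_of_not_lt hj)
      rw [hL]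
      rw [foldr_plcm_dvd_iff]
      intro a ha
      rw [List.mem_ofFn] at ha
      obtain ⟨t, rfl⟩ := ha
      exact (dvd_mul_iff_div_pgcd_dvd (g t) (NN t) p (hNNmonic t).ne_zero).mp (hdvd t)
    · intro h
      funext c
      have h2 : NN c.1 ∣ p * g c.1 := by
        rw [dvd_mul_iff_div_pgcd_dvd (g c.1) (NN c.1) p (hNNmonic c.1).ne_zero]
        refine (foldr_plcm_dvd_iff _ p).mp h _ ?_
        rw [List.mem_ofFn]
        exact ⟨c.1, rfl⟩
      show ((p * g c.1) %ₘ NN c.1).coeff c.2.1 = 0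
      rw [(modByMonic_eq_zero_iff_dvd (hNNmonic c.1)).mpr h2, coeff_zero]
  have hrm : r ≤ m := by omega
  have hrs : r ≤ s := by omega
  have hind : LinearIndependent F (fun t : Fin r => M ⟨t.1, by omega⟩) := by
    rw [Fintype.linearIndependent_iff]
    intro c hc
    set p : Polynomial F := ∑ t : Fin r, C (c t) * X ^ (t : ℕ) with hp
    have hψp : ψ p = 0 := by
      rw [hp, map_sum, ← hc]
      apply Finset.sum_congr rfl
      intro t _
      rw [show (C (c t) * X ^ (t : ℕ) : Polynomial F) = c t • X ^ (t : ℕ) from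
        (smul_eq_C_mul _).symm, _root_.map_smul]
      congr 1
      exact (hrow ⟨t.1, by omega⟩).symm
    have hLp : L ∣ p := (hker p).mp hψp
    have hpdeg : p.degree < (r : WithBot ℕ) := by
      have := degree_sum_fin_lt c
      rw [hp]
      exact this
    have hp0 : p = 0 := by
      by_contra hne
      have h1 : L.degree ≤ p.degree := degree_le_of_dvd hLp hne
      have h2 : s ≤ p.natDegree := by
        rw [← hLdeg]
        exact natDegree_le_natDegree h1
      have h3 : p.natDegree < r := (natDegree_lt_iff_degree_lt hne).mpr hpdeg
      omega
    intro t
    have hco : (∑ b : Fin r, C (c b) * X ^ (b : ℕ)).coeff (t : ℕ) = 0 := by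
      rw [← hp, hp0, coeff_zero]
    rw [finset_sum_coeff] at hco
    simp only [coeff_C_mul, coeff_X_pow, mul_ite, mul_one, mul_zero] at hco
    have hsum : (∑ b : Fin r, if (t : ℕ) = (b : ℕ) then c b else 0) = c t := by
      rw [Finset.sum_eq_single t
        (fun b _ hb => if_neg (fun hh => hb (Fin.ext hh.symm)))
        (fun h => absurd (Finset.mem_univ t) h)]
      exact if_pos rfl
    rw [hsum] at hco
    exact hco
  refine ⟨?_, hind⟩
  rw [Matrix.rank_eq_finrank_span_row]
  have hspan : Submodule.span F (Set.range M) =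
      Submodule.span F (Set.range (fun t : Fin r => M ⟨t.1, by omega⟩)) := by
    apply le_antisymm
    · rw [Submodule.span_le]
      rintro x ⟨i, rfl⟩
      by_cases hi : i.1 < r
      · apply Submodule.subset_span
        exact ⟨⟨i.1, hi⟩, rfl⟩
      · have hrseq : r = s := by omega
        set w : Polynomial F := X ^ (i : ℕ) %ₘ L with hw
        have hwdeg : w.degree < (s : WithBot ℕ) := by
          have h1 := degree_modByMonic_lt (X ^ (i : ℕ)) hLmonic
          have h2 : L.degree = (s : WithBot ℕ) := by
            rw [degree_eq_natDegree hLmonic.ne_zero, hLdeg]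
          rw [← h2]
          exact h1
        have hMi : M i = ψ w := by
          rw [hrow i]
          have hdv : L ∣ (X ^ (i : ℕ) - w) := by
            refine ⟨X ^ (i : ℕ) /ₘ L, ?_⟩
            have hmd := modByMonic_add_div (X ^ (i : ℕ)) L
            rw [hw]
            linear_combination -hmd
          have h0 : ψ (X ^ (i : ℕ) - w) = 0 := (hker _).mpr hdv
          rw [map_sub] at h0
          exact (sub_eq_zero.mp h0)
        rw [hMi]
        have hwsum : w = ∑ j ∈ Finset.range s, C (w.coeff j) * X ^ j := by
          apply Polynomial.ext
          intro t
          rw [coeff_sum_C_mul_X_pow]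
          split
          · rfl
          · next hts =>
              exact coeff_eq_zero_of_degree_lt (lt_of_lt_of_le hwdeg (by
                exact_mod_cast Nat.cast_le.mpr (Nat.le_of_not_lt hts)))
        rw [hwsum, map_sum]
        apply Submodule.sum_mem
        intro j hj
        rw [show (C (w.coeff j) * X ^ j : Polynomial F) = w.coeff j • X ^ j from
          (smul_eq_C_mul _).symm, _root_.map_smul]
        apply Submodule.smul_mem
        apply Submodule.subset_span
        have hjr : j < r := by
          rw [hrseq]
          exact Finset.mem_range.mp hj
        exact ⟨⟨j, hjr⟩, hrow ⟨j, by omega⟩⟩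
    · apply Submodule.span_mono
      rintro x ⟨t, rfl⟩
      exact ⟨⟨t.1, by omega⟩, rfl⟩
  show Module.finrank F (Submodule.span F (Set.range M)) = r
  rw [hspan]
  have hcard := finrank_span_eq_card hind
  rw [Fintype.card_fin] at hcard
  exact hcard
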